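/- arXiv:2601.07669 — 6 statements merged into one kernel-verified Lean document; each statement's English description precedes it below -/
import Mathlib

section
/- If condition (⋆) holds for the singleton group {a}, then the relation ⊵_a is transitive: for all worlds X, Y, Z, if X ⊵_a Y and Y ⊵_a Z, then X ⊵_a Z. (This is the semantic content of the validity [⊵]_a φ → [⊵]_a [⊵]_a φ.) -/
variable {V A : Type*}

/-- The set of colors appearing in the intersection `X ∩ Y`. -/
def colorsIn [DecidableEq V] (χ : V → A) (X Y : Finset V) : Set A :=
  {b | ∃ v ∈ X ∩ Y, χ v = b}

/-- Indistinguishability relation `X ∼_G Y`. -/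
def sim [DecidableEq V] (χ : V → A) (W : Set (Finset V)) (G : Set A)
    (X Y : Finset V) : Prop :=
  X ∈ W ∧ Y ∈ W ∧ G ⊆ colorsIn χ X Y

/-- Multiplicity `m_a(X)` of agent `a` in world `X`. -/
def mult [DecidableEq A] (χ : V → A) (a : A) (X : Finset V) : ℕ :=
  (X.filter fun v => χ v = a).card

/-- Local plausibility `X ⊴_a Y`. -/
def locle [DecidableEq V] [DecidableEq A] (χ : V → A) (W : Set (Finset V)) (a : A)
    (X Y : Finset V) : Prop :=
  sim χ W {a} X Y ∧ mult χ a X ≤ mult χ a Y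

/-- `X ⊵_a Y`, i.e. `Y ⊴_a X`. -/
def locge [DecidableEq V] [DecidableEq A] (χ : V → A) (W : Set (Finset V)) (a : A)
    (X Y : Finset V) : Prop :=
  locle χ W a Y X

/-- Strict local plausibility `X ◁_a Y`. -/
def loclt [DecidableEq V] [DecidableEq A] (χ : V → A) (W : Set (Finset V)) (a : A)
    (X Y : Finset V) : Prop :=
  sim χ W {a} X Y ∧ mult χ a X < mult χ a Y

/-- `Min_⊴a(X)`: worlds `Y ∈ W` with `Y ∼_a X` such that no `Z ∈ W` satisfies `Z ◁_a Y`. -/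
def minSet [DecidableEq V] [DecidableEq A] (χ : V → A) (W : Set (Finset V)) (a : A)
    (X : Finset V) : Set (Finset V) :=
  {Y | Y ∈ W ∧ sim χ W {a} Y X ∧ ¬ ∃ Z ∈ W, loclt χ W a Z Y}

/-- Condition (⋆) for the group `G`. -/
def starCond [DecidableEq V] (χ : V → A) (W : Set (Finset V)) (G : Set A) : Prop :=
  ∀ X Y Z, X ∈ W → Y ∈ W → Z ∈ W →
    G ⊆ colorsIn χ X Y → G ⊆ colorsIn χ Y Z → G ⊆ colorsIn χ X Z

/-- Agent `a` is alive in world `X`. -/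
def aliveIn (χ : V → A) (a : A) (X : Finset V) : Prop :=
  ∃ v ∈ X, χ v = a

/-- `alive(G)`: the set of worlds in which every agent of the group `G` is alive. -/
def aliveSet (χ : V → A) (W : Set (Finset V)) (G : Set A) : Set (Finset V) :=
  {X | X ∈ W ∧ ∀ g ∈ G, ∃ v ∈ X, χ v = g}

/-- under condition (⋆) for `{a}`, the relation `⊵_a` is transitive. -/
theorem locge_transitive [DecidableEq V] [DecidableEq A]
    (χ : V → A) (W : Set (Finset V)) (a : A)
    (hstar : starCond χ W {a}) :
    ∀ X Y Z : Finset V, locge χ W a X Y → locge χ W a Y Z → locge χ W a X Z := by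
  rintro X Y Z ⟨⟨hY, hX, hYX⟩, hm1⟩ ⟨⟨hZ, hY', hZY⟩, hm2⟩
  exact ⟨⟨hZ, hX, hstar Z Y X hZ hY hX hZY hYX⟩, hm2.trans hm1⟩
end

section
/- Assume condition (⋆) holds for the singleton group {a}. Then for every predicate P on worlds and every world X: if there exists a world Z with X ⊵_a Z such that P(V) holds for every V with Z ⊵_a V, then for every world Y with X ⊵_a Y there exists a world V with Y ⊵_a V and P(V). (This is the semantic content of the validity ⟨⊵⟩_a [⊵]_a φ → [⊵]_a ⟨⊵⟩_a φ.) -/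
variable {V A : Type*}

/-- semantic content of the validity `⟨⊵⟩_a [⊵]_a φ → [⊵]_a ⟨⊵⟩_a φ`. -/
theorem safe_belief_dot2 [DecidableEq V] [DecidableEq A]
    (χ : V → A) (W : Set (Finset V)) (a : A)
    (hstar : starCond χ W {a}) :
    ∀ (P : Finset V → Prop) (X : Finset V),
      (∃ Z, locge χ W a X Z ∧ ∀ V', locge χ W a Z V' → P V') →
        ∀ Y, locge χ W a X Y → ∃ V', locge χ W a Y V' ∧ P V' := by
  rintro P X ⟨Z, hXZ, hP⟩ Y hXY
  obtain ⟨⟨hZW, hXW, hZX⟩, hmZX⟩ := hXZ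
  obtain ⟨⟨hYW, -, hYX⟩, hmYX⟩ := hXY
  have hXY' : ({a} : Set A) ⊆ colorsIn χ X Y := by
    intro b hb; obtain ⟨v, hv, hvc⟩ := hYX hb
    exact ⟨v, by rwa [Finset.inter_comm], hvc⟩
  have hZY : ({a} : Set A) ⊆ colorsIn χ Z Y := hstar Z X Y hZW hXW hYW hZX hXY'
  have hYZ : ({a} : Set A) ⊆ colorsIn χ Y Z := by
    intro b hb; obtain ⟨v, hv, hvc⟩ := hZY hb
    exact ⟨v, by rwa [Finset.inter_comm], hvc⟩
  have hZZ : ({a} : Set A) ⊆ colorsIn χ Z Z := by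
    intro b hb; obtain ⟨v, hv, hvc⟩ := hZX hb
    rw [Finset.mem_inter] at hv
    exact ⟨v, Finset.mem_inter.2 ⟨hv.1, hv.1⟩, hvc⟩
  have hYY : ({a} : Set A) ⊆ colorsIn χ Y Y := by
    intro b hb; obtain ⟨v, hv, hvc⟩ := hYX hb
    rw [Finset.mem_inter] at hv
    exact ⟨v, Finset.mem_inter.2 ⟨hv.1, hv.1⟩, hvc⟩
  by_cases h : mult χ a Z ≤ mult χ a Y
  · exact ⟨Z, ⟨⟨hZW, hYW, hZY⟩, h⟩, hP Z ⟨⟨hZW, hZW, hZZ⟩, le_rfl⟩⟩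
  · exact ⟨Y, ⟨⟨hYW, hYW, hYY⟩, le_rfl⟩,
      hP Y ⟨⟨hYW, hZW, hYZ⟩, le_of_not_ge h⟩⟩
end

section
/- Assume condition (⋆) holds for the singleton group {a}. If Y ⊴_a X and Z ∈ Min_⊴a(X), then Z ⊴_a Y. -/
variable {V A : Type*}

/-- under condition (⋆) for `{a}`, if `Y ⊴_a X` and `Z ∈ Min_⊴a(X)`,
then `Z ⊴_a Y`. -/
theorem minSet_locle [DecidableEq V] [DecidableEq A]
    (χ : V → A) (W : Set (Finset V)) (a : A)
    (hstar : starCond χ W {a}) (X Y Z : Finset V)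
    (hYX : locle χ W a Y X) (hZ : Z ∈ minSet χ W a X) :
    locle χ W a Z Y := by
  obtain ⟨hZW, ⟨_, hXW, hZX⟩, hmin⟩ := hZ
  obtain ⟨⟨hYW, _, hYX'⟩, _⟩ := hYX
  have hcomm : ∀ U V' : Finset V, colorsIn χ U V' = colorsIn χ V' U := by
    intro U V'
    simp [colorsIn, Finset.inter_comm]
  have hXY : ({a} : Set A) ⊆ colorsIn χ X Y := by rw [hcomm]; exact hYX'
  have hZY : ({a} : Set A) ⊆ colorsIn χ Z Y := hstar Z X Y hZW hXW hYW hZX hXY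
  refine ⟨⟨hZW, hYW, hZY⟩, ?_⟩
  by_contra h
  push_neg at h
  exact hmin ⟨Y, hYW, ⟨hYW, hZW, by rw [hcomm]; exact hZY⟩, h⟩
end

section
/- Most plausible belief coincides with ⟨⊵⟩[⊵]: assume condition (⋆) holds for the singleton group {a}, X ∈ W, and agent a is alive in X. Then for every predicate P on worlds: P(Y) holds for every Y ∈ Min_⊴a(X) if and only if there exists a world Y with X ⊵_a Y such that P(Z) holds for every world Z with Y ⊵_a Z. -/
variable {V A : Type*}

lemma colorsIn_symm [DecidableEq V] (χ : V → A) (X Y : Finset V) :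
    colorsIn χ X Y = colorsIn χ Y X := by
  unfold colorsIn; rw [Finset.inter_comm]

lemma sim_symm [DecidableEq V] {χ : V → A} {W : Set (Finset V)} {G : Set A}
    {X Y : Finset V} (h : sim χ W G X Y) : sim χ W G Y X := by
  obtain ⟨hX, hY, hsub⟩ := h
  exact ⟨hY, hX, (colorsIn_symm χ Y X) ▸ hsub⟩

lemma sim_trans [DecidableEq V] {χ : V → A} {W : Set (Finset V)} {a : A}
    (hstar : starCond χ W {a}) {X Y Z : Finset V}
    (h1 : sim χ W {a} X Y) (h2 : sim χ W {a} Y Z) : sim χ W {a} X Z :=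
  ⟨h1.1, h2.2.1, hstar X Y Z h1.1 h1.2.1 h2.2.1 h1.2.2 h2.2.2⟩

/-- most plausible belief coincides with `⟨⊵⟩_a [⊵]_a`. -/
theorem belief_iff_diamond_box [DecidableEq V] [DecidableEq A]
    (χ : V → A) (W : Set (Finset V)) (a : A) (X : Finset V)
    (hstar : starCond χ W {a}) (hX : X ∈ W) (halive : aliveIn χ a X) :
    ∀ P : Finset V → Prop,
      (∀ Y ∈ minSet χ W a X, P Y) ↔
        ∃ Y, locge χ W a X Y ∧ ∀ Z, locge χ W a Y Z → P Z := by
  intro P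
  have hXX : sim χ W {a} X X := by
    refine ⟨hX, hX, ?_⟩
    intro b hb
    obtain ⟨v, hv, hχ⟩ := halive
    exact ⟨v, by simp [hv], by rw [hχ]; exact hb.symm⟩
  constructor
  · intro hmin
    -- choose a world of minimal multiplicity in the class of X
    set S : Set ℕ := {n | ∃ Y, Y ∈ W ∧ sim χ W {a} Y X ∧ mult χ a Y = n} with hS
    have hne : S.Nonempty := ⟨mult χ a X, X, hX, hXX, rfl⟩
    obtain ⟨Y, hYW, hYX, hYm⟩ := Nat.sInf_mem hne
    refine ⟨Y, ⟨hYX, ?_⟩, ?_⟩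
    · rw [hYm]
      exact Nat.sInf_le ⟨X, hX, hXX, rfl⟩
    · intro Z hZY
      obtain ⟨hZY, hZm⟩ := hZY
      apply hmin
      refine ⟨hZY.1, sim_trans hstar hZY hYX, ?_⟩
      rintro ⟨U, hUW, hUZ, hUm⟩
      have hUX : sim χ W {a} U X := sim_trans hstar hUZ (sim_trans hstar hZY hYX)
      have : sInf S ≤ mult χ a U := Nat.sInf_le ⟨U, hUW, hUX, rfl⟩
      omega
  · rintro ⟨Y, ⟨hYX, hYm⟩, hall⟩ Z ⟨hZW, hZX, hZmin⟩
    apply hall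
    have hZY : sim χ W {a} Z Y := sim_trans hstar hZX (sim_symm hYX)
    refine ⟨hZY, ?_⟩
    by_contra h
    exact hZmin ⟨Y, hYX.1, sim_symm hZY, by omega⟩
end

section
/- No knowledge gain along morphisms: let f be a morphism from the first structure to the second, i.e., χ'(f(v)) = χ(v) for all v ∈ V, f(X) ∈ W' for all X ∈ W, and ℓ'(f(X)) = ℓ(X) for all X ∈ W. Then for every positive formula ψ and every X ∈ W: if ψ is true at f(X) in the second model, then ψ is true at X in the first model. -/
variable {V A : Type*}

/-- Epistemic formulas: atoms, negation, conjunction, and distributed knowledge. -/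
inductive Form (A P0 : Type*) where
  | atom : P0 → Form A P0
  | neg : Form A P0 → Form A P0
  | and : Form A P0 → Form A P0 → Form A P0
  | know : Set A → Form A P0 → Form A P0

/-- Truth of a formula at a world of a model `(χ, W, ℓ)`. -/
def truth {P0 : Type*} [DecidableEq V] (χ : V → A) (W : Set (Finset V))
    (ℓ : Finset V → Set P0) : Finset V → Form A P0 → Prop
  | X, .atom p => p ∈ ℓ X
  | X, .neg φ => ¬ truth χ W ℓ X φ
  | X, .and φ ψ => truth χ W ℓ X φ ∧ truth χ W ℓ X ψ
  | X, .know G φ => ∀ Y ∈ W, sim χ W G X Y → truth χ W ℓ Y φ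

/-- Modality-free (purely Boolean) formulas. -/
def ModFree {A P0 : Type*} : Form A P0 → Prop
  | .atom _ => True
  | .neg φ => ModFree φ
  | .and φ ψ => ModFree φ ∧ ModFree ψ
  | .know _ _ => False

/-- Positive formulas: generated from modality-free formulas by conjunction,
disjunction (`φ ∨ ψ := ¬(¬φ ∧ ¬ψ)`), and the knowledge modalities. -/
inductive Positive {A P0 : Type*} : Form A P0 → Prop
  | base (φ : Form A P0) : ModFree φ → Positive φ
  | and (φ ψ : Form A P0) : Positive φ → Positive ψ → Positive (φ.and ψ)
  | or (φ ψ : Form A P0) : Positive φ → Positive ψ → Positive ((φ.neg.and ψ.neg).neg)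
  | know (G : Set A) (φ : Form A P0) : Positive φ → Positive (Form.know G φ)

lemma modfree_truth_iff {P0 : Type*} [DecidableEq V]
    (χ₁ : V → A) (W₁ : Set (Finset V)) (ℓ₁ : Finset V → Set P0)
    {V2 : Type*} [DecidableEq V2]
    (χ₂ : V2 → A) (W₂ : Set (Finset V2)) (ℓ₂ : Finset V2 → Set P0)
    (X : Finset V) (Y : Finset V2) (hl : ℓ₁ X = ℓ₂ Y)
    (φ : Form A P0) (hφ : ModFree φ) :
    truth χ₁ W₁ ℓ₁ X φ ↔ truth χ₂ W₂ ℓ₂ Y φ := by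
  induction φ with
  | atom p => simp [truth, hl]
  | neg φ ih => simp only [truth]; exact not_congr (ih hφ)
  | and φ ψ ih1 ih2 => simp only [truth]; exact and_congr (ih1 hφ.1) (ih2 hφ.2)
  | know G φ ih => exact absurd hφ (by simp [ModFree])

/-- no knowledge gain along morphisms for positive formulas. -/
theorem no_knowledge_gain {V' : Type*} {P0 : Type*} [DecidableEq V] [DecidableEq V']
    (χ : V → A) (χ' : V' → A) (W : Set (Finset V)) (W' : Set (Finset V'))
    (ℓ : Finset V → Set P0) (ℓ' : Finset V' → Set P0) (f : V → V')
    (hχ : ∀ v, χ' (f v) = χ v)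
    (hW : ∀ X ∈ W, X.image f ∈ W')
    (hℓ : ∀ X ∈ W, ℓ' (X.image f) = ℓ X)
    (ψ : Form A P0) (hψ : Positive ψ) (X : Finset V) (hX : X ∈ W)
    (h : truth χ' W' ℓ' (X.image f) ψ) :
    truth χ W ℓ X ψ := by
  induction hψ generalizing X with
  | base φ hφ =>
      exact (modfree_truth_iff χ W ℓ χ' W' ℓ' X (X.image f) (hℓ X hX).symm φ hφ).mpr h
  | and φ ψ _ _ ih1 ih2 => exact ⟨ih1 X hX h.1, ih2 X hX h.2⟩
  | or φ ψ _ _ ih1 ih2 =>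
      simp only [truth, not_and_or, not_not] at h ⊢
      rcases h with h | h
      · exact Or.inl (ih1 X hX h)
      · exact Or.inr (ih2 X hX h)
  | know G φ _ ih =>
      intro Y hY hsim
      refine ih Y hY (h (Y.image f) (hW Y hY) ?_)
      refine ⟨hW X hX, hW Y hY, fun g hg => ?_⟩
      obtain ⟨v, hv, hvg⟩ := hsim.2.2 hg
      simp only [Finset.mem_inter] at hv
      exact ⟨f v, Finset.mem_inter.mpr ⟨Finset.mem_image_of_mem f hv.1,
        Finset.mem_image_of_mem f hv.2⟩, by rw [hχ v]; exact hvg⟩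
end

section
/- Belief gain along morphisms is possible: there exist a type V of vertices, a type A of agents, a coloring χ : V → A, two sets of worlds W and W' each satisfying condition (⋆) for every singleton group, a map f : V → V with χ(f(v)) = χ(v) for all v and f(X) ∈ W' for all X ∈ W (images as finite sets), predicates P on the worlds of W and P' on the worlds of W' with P'(f(X)) ↔ P(X) for all X ∈ W, an agent a, and a world Y ∈ W such that: P'(Z') holds for every Z' with f(Y) ⊵'_a Z' (computed in W'), but it is not the case that P(Z) holds for every Z with Y ⊵_a Z (computed in W). Hence safe belief [⊵]_a p can hold at f(Y) while failing at Y. -/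
variable {V A : Type*}

/-- belief gain along morphisms is possible. -/
theorem belief_gain_possible :
    ∃ (V A : Type) (_ : DecidableEq V) (_ : DecidableEq A) (χ : V → A)
      (W W' : Set (Finset V)) (f : V → V)
      (P P' : Finset V → Prop) (a : A) (Y : Finset V),
      (∀ b : A, starCond χ W {b}) ∧
      (∀ b : A, starCond χ W' {b}) ∧
      (∀ v, χ (f v) = χ v) ∧
      (∀ X ∈ W, X.image f ∈ W') ∧
      (∀ X ∈ W, (P' (X.image f) ↔ P X)) ∧
      Y ∈ W ∧
      (∀ Z', locge χ W' a (Y.image f) Z' → P' Z') ∧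
      ¬ (∀ Z, locge χ W a Y Z → P Z) := by
  refine ⟨Fin 3, Unit, inferInstance, inferInstance, fun _ => (),
    {({0,1} : Finset (Fin 3)), {0,2}}, {({0} : Finset (Fin 3)), {0,2}},
    fun v => if v = 1 then 0 else v,
    (fun X => X = {0,1}), (fun X => X = {0}), (), {0,1}, ?_, ?_, ?_, ?_, ?_, ?_, ?_, ?_⟩
  · intro b X Z W hX _ hW _ _
    intro c _
    have h0X : (0 : Fin 3) ∈ X := by
      rcases hX with h | h <;> subst h <;> decide
    have h0W : (0 : Fin 3) ∈ W := by
      rcases hW with h | h <;> subst h <;> decide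
    exact ⟨0, Finset.mem_inter.mpr ⟨h0X, h0W⟩, rfl⟩
  · intro b X Z W hX _ hW _ _
    intro c _
    have h0X : (0 : Fin 3) ∈ X := by
      rcases hX with h | h <;> subst h <;> decide
    have h0W : (0 : Fin 3) ∈ W := by
      rcases hW with h | h <;> subst h <;> decide
    exact ⟨0, Finset.mem_inter.mpr ⟨h0X, h0W⟩, rfl⟩
  · intro v; rfl
  · intro X hX
    rcases hX with h | h <;> subst h
    · left; decide
    · right; simp only [Set.mem_singleton_iff]; decide
  · intro X hX
    rcases hX with h | h <;> subst h
    · have h1 : Finset.image (fun v => if v = 1 then 0 else v) ({0,1} : Finset (Fin 3)) = {0} := by decide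
      rw [h1]; simp
    · have h2 : Finset.image (fun v => if v = 1 then 0 else v) ({0,2} : Finset (Fin 3)) = {0,2} := by decide
      rw [h2]
      constructor <;> intro h <;> exact absurd h (by decide)
  · left; rfl
  · intro Z' hZ'
    have h1 : Finset.image (fun v => if v = 1 then 0 else v) ({0,1} : Finset (Fin 3)) = {0} := by decide
    rw [h1] at hZ'
    obtain ⟨⟨hZW, _, _⟩, hm⟩ := hZ'
    rcases hZW with h | h
    · exact h
    · exfalso
      rw [Set.mem_singleton_iff] at h
      subst h
      revert hm
      decide
  · intro h
    have := h {0,2} ⟨⟨by right; rfl, by left; rfl, fun c _ => ⟨0, by decide, rfl⟩⟩, by decide⟩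
    exact absurd this (by decide)
end
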